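/- Let M = (W,R,V) be a model with W and R disjoint, and let (W',R') be the frame with W' = W ∪ R and, for all worlds: for t,u ∈ W, tR'u iff tRu; for t ∈ W and (u,v) ∈ R, tR'(u,v) iff t = u; for (t,u) ∈ R and v ∈ W, (t,u)R'v iff u = v; and for (t,u),(v,w) ∈ R, (t,u)R'(v,w) iff t = v and u = w. Then the frame (W',R') is dense. -/
import Mathlib

/-- The new set of worlds: the (disjoint) union `W ∪ R` of the set of worlds `W`
and the set `R` of `R`-edges. -/
def ExtWorld (W : Type) (R : W → W → Prop) : Type := W ⊕ {q : W × W // R q.1 q.2}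

/-- The relation `R'` on `W ∪ R`: for `t,u ∈ W`, `tR'u` iff `tRu`; for `t ∈ W` and
`(u,v) ∈ R`, `tR'(u,v)` iff `t = u`; for `(t,u) ∈ R` and `v ∈ W`, `(t,u)R'v` iff
`u = v`; for `(t,u),(v,w) ∈ R`, `(t,u)R'(v,w)` iff `t = v` and `u = w`. -/
def ExtRel {W : Type} (R : W → W → Prop) : ExtWorld W R → ExtWorld W R → Prop
  | .inl t, .inl u => R t u
  | .inl t, .inr q => t = q.1.1
  | .inr q, .inl v => q.1.2 = v
  | .inr q, .inr q' => q.1.1 = q'.1.1 ∧ q.1.2 = q'.1.2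

/-- The frame `(W ∪ R, R')` is dense. -/
theorem stmt3 {W : Type} [Nonempty W] (R : W → W → Prop) :
    ∀ s t : ExtWorld W R, ExtRel R s t →
      ∃ u : ExtWorld W R, ExtRel R s u ∧ ExtRel R u t := by
  rintro (t | q) (u | q') h
  · exact ⟨.inr ⟨(t, u), h⟩, rfl, rfl⟩
  · exact ⟨.inr q', h, rfl, rfl⟩
  · exact ⟨.inr q, ⟨rfl, rfl⟩, h⟩
  · exact ⟨.inr q, ⟨rfl, rfl⟩, h⟩
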